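/- Let Ω ⊆ ℝ² be a long domain. Then for all positive integers k and ℓ there exists a multiset P ∈ 𝒫_{k,ℓ} attaining the minimum G_k^ℓ(Ω) = min_{P' ∈ 𝒫_{k,ℓ}} Σ_{(i,j) ∈ P'} ‖(i,j)‖_Ω^* which is of one of the following two forms: either P = {(0,k)}, or P consists of r copies of (0,1) together with one pair (1,j), where 0 ≤ r ≤ ℓ − 1, j ≥ 0, and 2r + j + 1 = k. -/
import Mathlib


open scoped BigOperators

/-- The "dual norm" `‖v‖_Ω^* = max_{w ∈ Ω} ⟨v,w⟩` of a vector `v ∈ ℝ²`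
with respect to a (nonempty compact) set `Ω ⊆ ℝ²`. -/
noncomputable def dualNorm (Ω : Set (ℝ × ℝ)) (v : ℝ × ℝ) : ℝ :=
  sSup ((fun w : ℝ × ℝ => v.1 * w.1 + v.2 * w.2) '' Ω)

/-- The dual norm of a pair of nonnegative integers. -/
noncomputable def pairNorm (Ω : Set (ℝ × ℝ)) (p : ℕ × ℕ) : ℝ :=
  dualNorm Ω ((p.1 : ℝ), (p.2 : ℝ))

/-- Total dual norm of a finite multiset of pairs. -/
noncomputable def totalNorm (Ω : Set (ℝ × ℝ)) (P : Multiset (ℕ × ℕ)) : ℝ :=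
  (P.map (pairNorm Ω)).sum

/-- `(k,ℓ)`-admissibility of a finite multiset of pairs in `ℤ_{≥0}² \ {(0,0)}`:
the index condition `Σ (i+j) + q − 1 = k` (written additively), weak permissibility,
and length at most `ℓ ∈ ℕ∞`. -/
def Admissible (k : ℕ) (ℓ : ℕ∞) (P : Multiset (ℕ × ℕ)) : Prop :=
  (∀ p ∈ P, p ≠ (0, 0)) ∧
  (P.map (fun p => p.1 + p.2)).sum + Multiset.card P = k + 1 ∧
  (2 ≤ Multiset.card P → (∃ p ∈ P, p.1 ≠ 0) ∧ (∃ p ∈ P, p.2 ≠ 0)) ∧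
  (Multiset.card P : ℕ∞) ≤ ℓ

/-- `(≥k,ℓ)`-admissibility: same as `(k,ℓ)`-admissibility with the index condition
relaxed to `Σ (i+j) + q − 1 ≥ k`. -/
def GeAdmissible (k : ℕ) (ℓ : ℕ∞) (P : Multiset (ℕ × ℕ)) : Prop :=
  (∀ p ∈ P, p ≠ (0, 0)) ∧
  k + 1 ≤ (P.map (fun p => p.1 + p.2)).sum + Multiset.card P ∧
  (2 ≤ Multiset.card P → (∃ p ∈ P, p.1 ≠ 0) ∧ (∃ p ∈ P, p.2 ≠ 0)) ∧
  (Multiset.card P : ℕ∞) ≤ ℓ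

/-- The combinatorial capacity `G_k^ℓ(Ω) = min_{P ∈ 𝒫_{k,ℓ}} Σ_{(i,j)∈P} ‖(i,j)‖_Ω^*`. -/
noncomputable def Gcap (Ω : Set (ℝ × ℝ)) (k : ℕ) (ℓ : ℕ∞) : ℝ :=
  sInf (totalNorm Ω '' {P | Admissible k ℓ P})

/-- A moment domain: a nonempty compact convex subset of the first quadrant of `ℝ²`
which is closed under coordinatewise decrease (the moment image of a 4-dimensional
convex toric domain). -/
def MomentDomain (Ω : Set (ℝ × ℝ)) : Prop :=
  Ω.Nonempty ∧ IsCompact Ω ∧ Convex ℝ Ω ∧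
  (∀ p ∈ Ω, 0 ≤ p.1 ∧ 0 ≤ p.2) ∧
  (∀ p ∈ Ω, ∀ q : ℝ × ℝ, 0 ≤ q.1 → q.1 ≤ p.1 → 0 ≤ q.2 → q.2 ≤ p.2 → q ∈ Ω)

/-- A long domain: a compact convex subset of the first quadrant containing the unit
square `[0,1] × [0,1]` and with maximal `y`-coordinate equal to `1`. -/
def LongDomain (Ω : Set (ℝ × ℝ)) : Prop :=
  IsCompact Ω ∧ Convex ℝ Ω ∧
  (∀ p ∈ Ω, 0 ≤ p.1 ∧ 0 ≤ p.2) ∧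
  Set.Icc ((0 : ℝ), (0 : ℝ)) (1, 1) ⊆ Ω ∧
  (∀ p ∈ Ω, p.2 ≤ 1)

section Aux
variable {Ω : Set (ℝ × ℝ)}

lemma mem_square (hΩ : LongDomain Ω) {x y : ℝ} (hx0 : 0 ≤ x) (hx1 : x ≤ 1)
    (hy0 : 0 ≤ y) (hy1 : y ≤ 1) : (x, y) ∈ Ω :=
  hΩ.2.2.2.1 ⟨⟨hx0, hy0⟩, ⟨hx1, hy1⟩⟩

lemma dualNorm_exists (hΩ : LongDomain Ω) (v : ℝ × ℝ) :
    ∃ w ∈ Ω, dualNorm Ω v = v.1 * w.1 + v.2 * w.2 := by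
  have hne : Ω.Nonempty := ⟨(0,0), mem_square hΩ le_rfl zero_le_one le_rfl zero_le_one⟩
  have hc : IsCompact ((fun w : ℝ × ℝ => v.1 * w.1 + v.2 * w.2) '' Ω) :=
    hΩ.1.image (by fun_prop)
  obtain ⟨w, hw, hval⟩ := hc.sSup_mem (hne.image _)
  exact ⟨w, hw, hval.symm⟩

lemma le_dualNorm (hΩ : LongDomain Ω) (v : ℝ × ℝ) {w : ℝ × ℝ} (hw : w ∈ Ω) :
    v.1 * w.1 + v.2 * w.2 ≤ dualNorm Ω v :=
  le_csSup ((hΩ.1.image (by fun_prop)).bddAbove) ⟨w, hw, rfl⟩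

lemma le_pairNorm (hΩ : LongDomain Ω) (p : ℕ × ℕ) :
    (p.1 : ℝ) + (p.2 : ℝ) ≤ pairNorm Ω p := by
  have hw : ((1:ℝ), (1:ℝ)) ∈ Ω := mem_square hΩ zero_le_one le_rfl zero_le_one le_rfl
  have := le_dualNorm hΩ ((p.1 : ℝ), (p.2 : ℝ)) hw
  simpa [pairNorm] using this

lemma pairNorm_nonneg (hΩ : LongDomain Ω) (p : ℕ × ℕ) : 0 ≤ pairNorm Ω p :=
  le_trans (by positivity) (le_pairNorm hΩ p)

lemma pairNorm_zero_one (hΩ : LongDomain Ω) : pairNorm Ω (0, 1) = 1 := by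
  refine le_antisymm ?_ ?_
  · obtain ⟨w, hw, hval⟩ := dualNorm_exists hΩ (((0:ℕ):ℝ), ((1:ℕ):ℝ))
    have hy1 := hΩ.2.2.2.2 w hw
    simp only [pairNorm]
    rw [hval]; simp; linarith
  · have := le_pairNorm hΩ (0,1); simpa using this

lemma pairNorm_one_le (hΩ : LongDomain Ω) (p : ℕ × ℕ) (hp : 1 ≤ p.1) :
    pairNorm Ω (1, p.1 + p.2 - 1) ≤ pairNorm Ω p := by
  obtain ⟨w, hw, hval⟩ :=
    dualNorm_exists hΩ (((1:ℕ):ℝ), ((p.1 + p.2 - 1 : ℕ) : ℝ))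
  have hcast : ((p.1 + p.2 - 1 : ℕ) : ℝ) = (p.1 : ℝ) + (p.2 : ℝ) - 1 := by
    have h1 : (1:ℕ) ≤ p.1 + p.2 := le_trans hp (Nat.le_add_right _ _)
    push_cast [h1]
    ring
  have hy1 : w.2 ≤ 1 := hΩ.2.2.2.2 w hw
  have hy0 : 0 ≤ w.2 := (hΩ.2.2.1 w hw).2
  have hx0 : 0 ≤ w.1 := (hΩ.2.2.1 w hw).1
  have hp1 : (1:ℝ) ≤ (p.1 : ℝ) := by exact_mod_cast hp
  have hp2 : (0:ℝ) ≤ (p.2 : ℝ) := by positivity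
  simp only [pairNorm] at hval ⊢
  rw [hval, hcast]
  push_cast
  rcases le_or_gt w.2 w.1 with hxy | hxy
  · have hle := le_dualNorm hΩ (((p.1:ℕ):ℝ), ((p.2:ℕ):ℝ)) hw
    simp only at hle
    nlinarith [mul_nonneg (sub_nonneg.2 hp1) (sub_nonneg.2 hxy)]
  · have hmem : (w.2, w.2) ∈ Ω := mem_square hΩ hy0 hy1 hy0 hy1
    have hle := le_dualNorm hΩ (((p.1:ℕ):ℝ), ((p.2:ℕ):ℝ)) hmem
    simp only at hle
    nlinarith [mul_nonneg (sub_nonneg.2 hp1) (sub_nonneg.2 hy0)]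

lemma pairNorm_one_add_le (hΩ : LongDomain Ω) (a m : ℕ) :
    pairNorm Ω (1, a + m) ≤ pairNorm Ω (1, a) + m := by
  obtain ⟨w, hw, hval⟩ := dualNorm_exists hΩ (((1:ℕ):ℝ), ((a + m : ℕ):ℝ))
  have hle := le_dualNorm hΩ (((1:ℕ):ℝ), ((a:ℕ):ℝ)) hw
  have hy1 : w.2 ≤ 1 := hΩ.2.2.2.2 w hw
  have hm0 : (0:ℝ) ≤ (m:ℝ) := by positivity
  simp only [pairNorm] at hle ⊢
  rw [hval]
  push_cast at hle ⊢
  nlinarith [mul_le_of_le_one_right hm0 hy1]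

lemma totalNorm_ge (hΩ : LongDomain Ω) (Q : Multiset (ℕ × ℕ)) :
    (((Q.map (fun p => p.1 + p.2)).sum : ℕ) : ℝ) ≤ totalNorm Ω Q := by
  induction Q using Multiset.induction with
  | empty => simp [totalNorm]
  | cons p Q ih =>
    simp only [totalNorm, Multiset.map_cons, Multiset.sum_cons] at ih ⊢
    push_cast at ih ⊢
    have := le_pairNorm hΩ p
    linarith

lemma totalNorm_nonneg (hΩ : LongDomain Ω) (Q : Multiset (ℕ × ℕ)) :
    0 ≤ totalNorm Ω Q :=
  le_trans (by positivity) (totalNorm_ge hΩ Q)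

lemma totalNorm_cand (hΩ : LongDomain Ω) (r j : ℕ) :
    totalNorm Ω (Multiset.replicate r (0,1) + {(1,j)}) = r + pairNorm Ω (1,j) := by
  simp [totalNorm, Multiset.map_replicate, Multiset.sum_replicate,
    pairNorm_zero_one hΩ]

lemma card_le_sumpairs (Q : Multiset (ℕ × ℕ)) (h : ∀ p ∈ Q, p ≠ (0,0)) :
    Multiset.card Q ≤ (Q.map (fun p => p.1 + p.2)).sum := by
  induction Q using Multiset.induction with
  | empty => simp
  | cons p Q ih =>
    simp only [Multiset.map_cons, Multiset.sum_cons, Multiset.card_cons]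
    have hp : p ≠ (0,0) := h p (Multiset.mem_cons_self _ _)
    have h1 : 1 ≤ p.1 + p.2 := by
      by_contra hcon
      exact hp (Prod.ext (by omega) (by omega))
    have := ih (fun q hq => h q (Multiset.mem_cons_of_mem hq))
    omega

end Aux

section Aux2
variable {Ω : Set (ℝ × ℝ)}

lemma adm_special {k : ℕ} {ℓ : ℕ∞} (hk : 1 ≤ k) (hℓ : 1 ≤ ℓ) :
    Admissible k ℓ ({(0, k)} : Multiset (ℕ × ℕ)) := by
  refine ⟨?_, ?_, ?_, ?_⟩
  · intro p hp
    rw [Multiset.mem_singleton] at hp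
    subst hp
    simp [Prod.ext_iff]
    omega
  · simp
  · intro h; simp at h
  · simpa using hℓ

lemma adm_cand {k : ℕ} {ℓ : ℕ∞} (r : ℕ) (hr : ((r : ℕ∞) + 1 ≤ ℓ)) (h2r : 2*r + 1 ≤ k) :
    Admissible k ℓ (Multiset.replicate r (0,1) + {(1, k - 1 - 2*r)}) := by
  have hcard : Multiset.card (Multiset.replicate r ((0:ℕ),(1:ℕ)) + {(1, k - 1 - 2*r)}) = r + 1 := by
    simp
  refine ⟨?_, ?_, ?_, ?_⟩
  · intro p hp
    rw [Multiset.mem_add] at hp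
    rcases hp with hp | hp
    · rw [Multiset.eq_of_mem_replicate hp]; simp
    · rw [Multiset.mem_singleton] at hp; subst hp; simp
  · rw [hcard]
    simp only [Multiset.map_add, Multiset.sum_add, Multiset.map_replicate,
      Multiset.sum_replicate, Multiset.map_singleton, Multiset.sum_singleton]
    simp only [smul_eq_mul]
    omega
  · intro h
    rw [hcard] at h
    constructor
    · exact ⟨(1, k - 1 - 2*r), Multiset.mem_add.2 (Or.inr (Multiset.mem_singleton_self _)), by simp⟩
    · refine ⟨(0,1), Multiset.mem_add.2 (Or.inl ?_), by simp⟩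
      rw [Multiset.mem_replicate]
      exact ⟨by omega, rfl⟩
  · rw [hcard]
    push_cast
    exact_mod_cast hr

lemma reduction (hΩ : LongDomain Ω) {k : ℕ} {ℓ : ℕ∞} (P : Multiset (ℕ × ℕ))
    (hP : Admissible k ℓ P) (p₀ : ℕ × ℕ) (hp₀ : p₀ ∈ P) (hi : p₀.1 ≠ 0) :
    totalNorm Ω (Multiset.replicate (Multiset.card P - 1) (0,1)
      + {(1, k + 1 - 2 * Multiset.card P)}) ≤ totalNorm Ω P := by
  obtain ⟨Q, rfl⟩ := Multiset.exists_cons_of_mem hp₀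
  obtain ⟨hne, hsum, -, -⟩ := hP
  set SQ := (Q.map (fun p => p.1 + p.2)).sum with hSQdef
  have hQge : Multiset.card Q ≤ SQ :=
    card_le_sumpairs Q (fun q hq => hne q (Multiset.mem_cons_of_mem hq))
  have hs₀ : 1 ≤ p₀.1 := Nat.one_le_iff_ne_zero.2 hi
  have hsum' : (p₀.1 + p₀.2) + SQ + (Multiset.card Q + 1) = k + 1 := by
    simp only [Multiset.map_cons, Multiset.sum_cons, Multiset.card_cons, ← hSQdef] at hsum
    omega
  have hcard' : Multiset.card (p₀ ::ₘ Q) - 1 = Multiset.card Q := by simp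
  have key : (p₀.1 + p₀.2 - 1) + (SQ - Multiset.card Q)
      = k + 1 - 2 * Multiset.card (p₀ ::ₘ Q) := by
    simp only [Multiset.card_cons]
    omega
  have hA : ((SQ : ℕ) : ℝ) ≤ totalNorm Ω Q := totalNorm_ge hΩ Q
  have hB : pairNorm Ω (1, p₀.1 + p₀.2 - 1) ≤ pairNorm Ω p₀ := pairNorm_one_le hΩ p₀ hs₀
  have hC : pairNorm Ω (1, (p₀.1 + p₀.2 - 1) + (SQ - Multiset.card Q))
      ≤ pairNorm Ω (1, p₀.1 + p₀.2 - 1) + ((SQ - Multiset.card Q : ℕ) : ℝ) :=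
    pairNorm_one_add_le hΩ _ _
  rw [key] at hC
  have hTP : totalNorm Ω (p₀ ::ₘ Q) = pairNorm Ω p₀ + totalNorm Ω Q := by
    simp [totalNorm]
  rw [totalNorm_cand hΩ, hTP, hcard']
  have hc1 : ((SQ - Multiset.card Q : ℕ) : ℝ) = (SQ : ℝ) - (Multiset.card Q : ℝ) := by
    push_cast [hQge]; ring
  rw [hc1] at hC
  linarith

end Aux2

/-- for a long domain, the minimum defining `G_k^ℓ(Ω)` is attained
by a multiset which is either `{(0,k)}` or consists of `r` copies of `(0,1)`
together with one pair `(1,j)`, with `0 ≤ r ≤ ℓ−1`, `j ≥ 0`, `2r + j + 1 = k`. -/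
theorem stmt_3 (Ω : Set (ℝ × ℝ)) (hΩ : LongDomain Ω)
    (k ℓ : ℕ) (hk : 1 ≤ k) (hℓ : 1 ≤ ℓ) :
    ∃ P : Multiset (ℕ × ℕ), Admissible k (ℓ : ℕ∞) P ∧
      totalNorm Ω P = Gcap Ω k (ℓ : ℕ∞) ∧
      (P = {(0, k)} ∨
        ∃ r j : ℕ, r + 1 ≤ ℓ ∧ 2 * r + j + 1 = k ∧
          P = Multiset.replicate r (0, 1) + {(1, j)}) := by
  classical
  set cand : ℕ → Multiset (ℕ × ℕ) :=
    fun r => Multiset.replicate r (0,1) + {(1, k - 1 - 2*r)} with hcanddef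
  set F : Finset ℕ := (Finset.range k).filter (fun r => r + 1 ≤ ℓ ∧ 2*r + 1 ≤ k) with hFdef
  set C : Finset (Multiset (ℕ × ℕ)) := insert {(0,k)} (F.image cand) with hCdef
  have hℓ' : (1:ℕ∞) ≤ (ℓ:ℕ∞) := by exact_mod_cast hℓ
  have hadm : ∀ P ∈ C, Admissible k (ℓ:ℕ∞) P := by
    intro P hP
    rw [hCdef, Finset.mem_insert] at hP
    rcases hP with rfl | hP
    · exact adm_special hk hℓ'
    · obtain ⟨r, hr, rfl⟩ := Finset.mem_image.1 hP
      rw [hFdef, Finset.mem_filter] at hr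
      exact adm_cand r (by exact_mod_cast hr.2.1) hr.2.2
  obtain ⟨P₀, hP₀C, hmin⟩ :=
    C.exists_min_image (totalNorm Ω) ⟨_, Finset.mem_insert_self {(0,k)} _⟩
  have hbdd : BddBelow (totalNorm Ω '' {P | Admissible k (ℓ:ℕ∞) P}) :=
    ⟨0, by rintro x ⟨P, -, rfl⟩; exact totalNorm_nonneg hΩ P⟩
  have hle : Gcap Ω k (ℓ:ℕ∞) ≤ totalNorm Ω P₀ :=
    csInf_le hbdd ⟨P₀, hadm P₀ hP₀C, rfl⟩
  have hge : totalNorm Ω P₀ ≤ Gcap Ω k (ℓ:ℕ∞) := by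
    refine le_csInf ⟨totalNorm Ω {(0,k)}, ⟨{(0,k)}, adm_special hk hℓ', rfl⟩⟩ ?_
    rintro x ⟨P, hP, rfl⟩
    by_cases hall : ∀ p ∈ P, p.1 = 0
    · have hPeq : P = {(0,k)} := by
        obtain ⟨hne, hsum, hweak, -⟩ := hP
        have hcle : Multiset.card P ≤ 1 := by
          by_contra hc
          push_neg at hc
          obtain ⟨⟨p, hp, hp1⟩, -⟩ := hweak (by omega)
          exact hp1 (hall p hp)
        have hcge : 1 ≤ Multiset.card P := by
          rcases Nat.eq_zero_or_pos (Multiset.card P) with h0 | h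
          · rw [Multiset.card_eq_zero] at h0
            subst h0
            simp at hsum
          · exact h
        have hc1 : Multiset.card P = 1 := le_antisymm hcle hcge
        obtain ⟨a, rfl⟩ := Multiset.card_eq_one.1 hc1
        have ha1 : a.1 = 0 := hall a (Multiset.mem_singleton_self a)
        have ha2 : a.2 = k := by
          simp only [Multiset.map_singleton, Multiset.sum_singleton,
            Multiset.card_singleton] at hsum
          omega
        rw [Multiset.singleton_inj]
        exact Prod.ext ha1 ha2
      rw [hPeq]
      exact hmin _ (Finset.mem_insert_self _ _)
    · push_neg at hall
      obtain ⟨p₀, hp₀, hi⟩ := hall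
      have hred := reduction hΩ P hP p₀ hp₀ hi
      have hq1 : 1 ≤ Multiset.card P := by
        have : P ≠ 0 := by
          intro h0; subst h0; exact absurd hp₀ (Multiset.notMem_zero p₀)
        have := Multiset.card_pos.2 this
        omega
      have hsle : Multiset.card P ≤ (P.map (fun p => p.1 + p.2)).sum :=
        card_le_sumpairs P hP.1
      have h2q : 2 * Multiset.card P ≤ k + 1 := by
        have := hP.2.1
        omega
      have hqℓ : Multiset.card P ≤ ℓ := by exact_mod_cast hP.2.2.2
      have hmem : Multiset.replicate (Multiset.card P - 1) (0,1)
          + {(1, k + 1 - 2 * Multiset.card P)} ∈ C := by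
        rw [hCdef]
        apply Finset.mem_insert_of_mem
        refine Finset.mem_image.2 ⟨Multiset.card P - 1, ?_, ?_⟩
        · rw [hFdef, Finset.mem_filter, Finset.mem_range]
          omega
        · show Multiset.replicate _ (0,1) + {(1, k - 1 - 2*(Multiset.card P - 1))} = _
          have heq : k - 1 - 2 * (Multiset.card P - 1) = k + 1 - 2 * Multiset.card P := by
            omega
          rw [heq]
      exact le_trans (hmin _ hmem) hred
  refine ⟨P₀, hadm P₀ hP₀C, le_antisymm hge hle, ?_⟩
  rw [hCdef, Finset.mem_insert] at hP₀C
  rcases hP₀C with rfl | hP₀C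
  · exact Or.inl rfl
  · obtain ⟨r, hr, rfl⟩ := Finset.mem_image.1 hP₀C
    rw [hFdef, Finset.mem_filter] at hr
    exact Or.inr ⟨r, k - 1 - 2*r, hr.2.1, by omega, rfl⟩
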